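/- Under the hypotheses of the implicit step and with the discrete Poincaré inequality constant A, the solution of the implicit advection–diffusion step satisfies the damped estimate ‖ũ^{n+1}‖_{Ω_h} ≤ (1 + 3A⁻²τ)⁻¹ (‖u^n‖_{Ω_h} + τ‖f^n‖_{Ω_h}). -/

import Mathlib

/-!
Pair the implicit step with `ũ` in the unscaled grid inner product. The advection term is the
skew-symmetric form of `(uⁿ·∇)ũ`: after shifting indices its pairing with `ũ` becomes
`½ ∑ |ũ|² 𝒟·uⁿ`, which vanishes since `uⁿ` is divergence free in the interior and `ũ` vanishes on
the boundary. Summation by parts turns `⟨ũᵢ, D_j² ũᵢ⟩` into `-‖D_j⁺ ũᵢ‖²`, which the Poincaré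
inequality bounds by `-A⁻² ‖ũᵢ‖²`; the three directions give the factor `3`. What is left is
`(1 + 3A⁻²τ) ‖ũ‖² ≤ ⟨ũ, uⁿ⟩ + τ ⟨ũ, fⁿ⟩`, and Cauchy–Schwarz finishes. Since `ũ` vanishes off
`Ω_h \ ∂Ω_h`, every shifted sum stays a sum over `Ω_h`.
-/

open Finset Real

/-- Lattice points of the grid (indices; the physical point is `h • x`). -/
abbrev Pt := Fin 3 → ℤ

/-- Standard basis vector of the lattice. -/
def ee (i : Fin 3) : Pt := fun j => if j = i then 1 else 0

/-- Central difference `D_i φ(x) = (φ(x+he^i) - φ(x-he^i))/(2h)`. -/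
noncomputable def Dc (h : ℝ) (i : Fin 3) (φ : Pt → ℝ) (x : Pt) : ℝ :=
  (φ (x + ee i) - φ (x - ee i)) / (2 * h)

/-- Forward difference `D_i⁺ φ(x) = (φ(x+he^i) - φ(x))/h`. -/
noncomputable def Dp (h : ℝ) (i : Fin 3) (φ : Pt → ℝ) (x : Pt) : ℝ :=
  (φ (x + ee i) - φ x) / h

/-- Second difference `D_i² φ(x) = (φ(x+he^i)+φ(x-he^i)-2φ(x))/h²`. -/
noncomputable def D2 (h : ℝ) (i : Fin 3) (φ : Pt → ℝ) (x : Pt) : ℝ :=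
  (φ (x + ee i) + φ (x - ee i) - 2 * φ x) / h ^ 2

/-- Central-difference divergence `𝒟·u`. -/
noncomputable def divc (h : ℝ) (u : Pt → Fin 3 → ℝ) (x : Pt) : ℝ :=
  ∑ i, Dc h i (fun y => u y i) x

open scoped Classical in
/-- Discrete boundary `∂Ω_h = {x ∈ Ω_h : {x ± he^i} ⊄ Ω_h}`. -/
noncomputable def bdry (Ω : Finset Pt) : Finset Pt :=
  Ω.filter (fun x => ∃ i : Fin 3, x + ee i ∉ Ω ∨ x - ee i ∉ Ω)

/-- Parity class (one of the eight classes G¹,…,G⁸) of a grid point. -/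
def parity (x : Pt) : Fin 3 → ZMod 2 := fun i => (x i : ZMod 2)

open scoped Classical in
/-- The interior sub-grid `Ω_h^∘`. -/
noncomputable def circInt (Ω : Finset Pt) : Finset Pt :=
  (Ω \ bdry Ω).filter
    (fun x => ∀ a : Fin 3 → ℤ, (∀ i, 0 ≤ a i ∧ a i ≤ 2) → x + a ∈ Ω \ bdry Ω)

open scoped Classical in
/-- The parity class `Ω_h^{∘j}` of the interior sub-grid. -/
noncomputable def circJ (Ω : Finset Pt) (p : Fin 3 → ZMod 2) : Finset Pt :=
  (circInt Ω).filter (fun x => parity x = p)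

/-- Discrete L² norm `‖u‖_{Ω_h}`. -/
noncomputable def dnorm (h : ℝ) (Ω : Finset Pt) (u : Pt → Fin 3 → ℝ) : ℝ :=
  Real.sqrt (∑ x ∈ Ω, (∑ i, (u x i) ^ 2) * h ^ 3)

theorem Finset.sum_comp_sub_eq_sum {G M : Type*} [AddGroup G] [AddCommMonoid M]
    (s : Finset G) (g : G → M) (c : G) (hg : ∀ x ∉ s, g x = 0)
    (hgc : ∀ x ∉ s, g (x - c) = 0) :
    ∑ x ∈ s, g (x - c) = ∑ x ∈ s, g x := by
  rw [← finsum_eq_sum_of_support_subset _ (Function.support_subset_iff'.2 hgc),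
    ← finsum_eq_sum_of_support_subset _ (Function.support_subset_iff'.2 hg)]
  exact finsum_comp_equiv (Equiv.subRight c)

theorem add_ee_notMem_sdiff_bdry {Ω : Finset Pt} {x : Pt} (i : Fin 3) (hx : x ∉ Ω) :
    x + ee i ∉ Ω \ bdry Ω := by
  intro hi
  simp only [bdry, mem_sdiff, mem_filter, not_and, not_exists] at hi
  simpa [hx] using hi.2 hi.1 i

section SummationByParts

variable {h : ℝ} {Ω : Finset Pt} {φ : Pt → ℝ}

theorem sum_mul_D2_eq_neg_sum_Dp_sq (hφ : ∀ x ∉ Ω \ bdry Ω, φ x = 0) (i : Fin 3) :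
    ∑ x ∈ Ω, φ x * D2 h i φ x = -∑ x ∈ Ω, Dp h i φ x ^ 2 := by
  set g : Pt → ℝ := fun y => φ (y + ee i) * (φ y - φ (y + ee i))
  have hpt : ∀ x, φ x * D2 h i φ x + Dp h i φ x ^ 2 = (g (x - ee i) - g x) / h ^ 2 := by
    intro x
    simp only [g, D2, Dp, sub_add_cancel, div_pow]
    ring
  have hshift : ∑ x ∈ Ω, g (x - ee i) = ∑ x ∈ Ω, g x :=
    sum_comp_sub_eq_sum Ω g (ee i)
      (fun x hx => by simp [g, hφ _ (add_ee_notMem_sdiff_bdry i hx)])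
      (fun x hx => by simp [g, hφ x (notMem_sdiff_of_notMem_left hx)])
  rw [eq_neg_iff_add_eq_zero, ← sum_add_distrib, sum_congr rfl fun x _ => hpt x, ← sum_div,
    sum_sub_distrib, hshift, sub_self, zero_div]

theorem sum_mul_advection_eq_neg_sum_sq_mul_Dc (hφ : ∀ x ∉ Ω \ bdry Ω, φ x = 0)
    (b : Pt → ℝ) (i : Fin 3) :
    ∑ x ∈ Ω, φ x * (b (x - ee i) * Dc h i φ (x - ee i) + b (x + ee i) * Dc h i φ (x + ee i))
      = -∑ x ∈ Ω, φ x ^ 2 * Dc h i b x := by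
  set g : Pt → ℝ := fun y => φ y * b (y + ee i) * φ (y + ee i + ee i)
  have hpt : ∀ x, φ x * (b (x - ee i) * Dc h i φ (x - ee i) + b (x + ee i) * Dc h i φ (x + ee i))
      + φ x ^ 2 * Dc h i b x = (g x - g (x - ee i - ee i)) / (2 * h) := by
    intro x
    simp only [g, Dc, sub_add_cancel, add_sub_cancel_right]
    ring
  have hφΩ : ∀ x ∉ Ω, φ x = 0 := fun x hx => hφ x (notMem_sdiff_of_notMem_left hx)
  have hshift₁ : ∑ x ∈ Ω, g (x - ee i - ee i) = ∑ x ∈ Ω, g (x - ee i) :=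
    sum_comp_sub_eq_sum Ω (fun y => g (y - ee i)) (ee i)
      (fun x hx => by simp [g, hφ _ (add_ee_notMem_sdiff_bdry i hx)])
      (fun x hx => by simp [g, hφΩ x hx])
  have hshift₂ : ∑ x ∈ Ω, g (x - ee i) = ∑ x ∈ Ω, g x :=
    sum_comp_sub_eq_sum Ω g (ee i) (fun x hx => by simp [g, hφΩ x hx])
      (fun x hx => by simp [g, hφ _ (add_ee_notMem_sdiff_bdry i hx)])
  rw [eq_neg_iff_add_eq_zero, ← sum_add_distrib, sum_congr rfl fun x _ => hpt x, ← sum_div,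
    sum_sub_distrib, hshift₁, hshift₂, sub_self, zero_div]

end SummationByParts

def DiscretePoincare (h : ℝ) (Ω : Finset Pt) (A : ℝ) : Prop :=
  ∀ φ : Pt → ℝ, (∀ x ∉ Ω, φ x = 0) → (∀ x ∈ bdry Ω, φ x = 0) →
    ∀ i : Fin 3, ∑ x ∈ Ω, (φ x) ^ 2 ≤ A ^ 2 * ∑ x ∈ Ω, (Dp h i φ x) ^ 2

theorem inv_sq_mul_le_of_le_sq_mul {A a b : ℝ} (hb : 0 ≤ b) (hab : a ≤ A ^ 2 * b) :
    (A⁻¹) ^ 2 * a ≤ b := by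
  rcases eq_or_ne A 0 with rfl | hA
  · simpa using hb
  · rwa [inv_pow, inv_mul_le_iff₀ (by positivity)]

theorem DiscretePoincare.sum_mul_D2_le {h A : ℝ} {Ω : Finset Pt} (hP : DiscretePoincare h Ω A)
    {φ : Pt → ℝ} (hφ : ∀ x ∉ Ω \ bdry Ω, φ x = 0) (i : Fin 3) :
    ∑ x ∈ Ω, φ x * D2 h i φ x ≤ -((A⁻¹) ^ 2 * ∑ x ∈ Ω, φ x ^ 2) := by
  have hpoin := hP φ (fun x hx => hφ x (notMem_sdiff_of_notMem_left hx))
    (fun x hx => hφ x fun hx' => (mem_sdiff.1 hx').2 hx) i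
  rw [sum_mul_D2_eq_neg_sum_Dp_sq hφ, neg_le_neg_iff]
  exact inv_sq_mul_le_of_le_sq_mul (sum_nonneg fun x _ => sq_nonneg _) hpoin

noncomputable def advection (h : ℝ) (b u : Pt → Fin 3 → ℝ) : Pt → Fin 3 → ℝ := fun x i =>
  -(1 / 2) * ∑ j, (b (x - ee j) j * Dc h j (fun y => u y i) (x - ee j)
    + b (x + ee j) j * Dc h j (fun y => u y i) (x + ee j))

noncomputable def laplacian (h : ℝ) (u : Pt → Fin 3 → ℝ) : Pt → Fin 3 → ℝ := fun x i =>
  ∑ j, D2 h j (fun y => u y i) x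

def gridInner (Ω : Finset Pt) (u v : Pt → Fin 3 → ℝ) : ℝ :=
  ∑ x ∈ Ω, ∑ i, u x i * v x i

section GridInner

variable {h : ℝ} {Ω : Finset Pt} {u : Pt → Fin 3 → ℝ}

theorem gridInner_add_right (u v w : Pt → Fin 3 → ℝ) :
    gridInner Ω u (v + w) = gridInner Ω u v + gridInner Ω u w := by
  simp only [gridInner, Pi.add_apply, mul_add, sum_add_distrib]

theorem gridInner_self_nonneg (u : Pt → Fin 3 → ℝ) : 0 ≤ gridInner Ω u u :=
  sum_nonneg fun _ _ => sum_nonneg fun _ _ => mul_self_nonneg _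

theorem gridInner_le_sqrt_mul_sqrt (u v : Pt → Fin 3 → ℝ) :
    gridInner Ω u v ≤ √(gridInner Ω u u) * √(gridInner Ω v v) := by
  simpa [gridInner, sum_product, sq] using
    Real.sum_mul_le_sqrt_mul_sqrt (Ω ×ˢ univ) (fun p => u p.1 p.2) (fun p => v p.1 p.2)

theorem dnorm_eq_sqrt_gridInner_mul (u : Pt → Fin 3 → ℝ) :
    dnorm h Ω u = √(gridInner Ω u u) * √(h ^ 3) := by
  rw [dnorm, ← sum_mul, ← Real.sqrt_mul (gridInner_self_nonneg u)]
  simp only [gridInner, sq]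

theorem gridInner_laplacian_le {A : ℝ} (hP : DiscretePoincare h Ω A)
    (hu : ∀ x ∉ Ω \ bdry Ω, u x = 0) :
    gridInner Ω u (laplacian h u) ≤ -(3 * (A⁻¹) ^ 2 * gridInner Ω u u) := by
  calc gridInner Ω u (laplacian h u)
      = ∑ i, ∑ j, ∑ x ∈ Ω, u x i * D2 h j (fun y => u y i) x := by
        simp only [gridInner, laplacian, mul_sum]
        rw [sum_comm]
        exact sum_congr rfl fun i _ => sum_comm
    _ ≤ ∑ i, ∑ _j : Fin 3, -((A⁻¹) ^ 2 * ∑ x ∈ Ω, u x i ^ 2) :=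
        sum_le_sum fun i _ => sum_le_sum fun j _ =>
          hP.sum_mul_D2_le (fun x hx => congrFun (hu x hx) i) j
    _ = -(3 * (A⁻¹) ^ 2 * gridInner Ω u u) := by
        simp only [gridInner, sum_const, card_univ, Fintype.card_fin, ← sq, mul_sum]
        rw [sum_comm]
        simp only [smul_neg, nsmul_eq_mul, sum_neg_distrib, mul_sum]
        norm_num [mul_assoc]

theorem gridInner_advection_eq_zero {b : Pt → Fin 3 → ℝ}
    (hdiv : ∀ x ∈ Ω \ bdry Ω, divc h b x = 0) (hu : ∀ x ∉ Ω \ bdry Ω, u x = 0) :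
    gridInner Ω u (advection h b u) = 0 := by
  have hdiv_mul : ∀ i x, u x i ^ 2 * divc h b x = 0 := fun i x => by
    by_cases hx : x ∈ Ω \ bdry Ω
    · simp [hdiv x hx]
    · simp [hu x hx]
  calc gridInner Ω u (advection h b u)
      = -(1 / 2) * ∑ i, ∑ j, ∑ x ∈ Ω, u x i * (b (x - ee j) j * Dc h j (fun y => u y i) (x - ee j)
          + b (x + ee j) j * Dc h j (fun y => u y i) (x + ee j)) := by
        simp only [gridInner, advection, mul_left_comm _ (-(1 / 2) : ℝ), ← mul_sum]
        rw [sum_comm]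
        exact congrArg _ (sum_congr rfl fun i _ => by simp only [mul_sum]; exact sum_comm)
    _ = -(1 / 2) * ∑ i, ∑ j, -∑ x ∈ Ω, u x i ^ 2 * Dc h j (fun y => b y j) x := by
        congr 1
        exact sum_congr rfl fun i _ => sum_congr rfl fun j _ =>
          sum_mul_advection_eq_neg_sum_sq_mul_Dc (fun x hx => congrFun (hu x hx) i)
            (fun y => b y j) j
    _ = 0 := by
        refine mul_eq_zero_of_right _ (sum_eq_zero fun i _ => ?_)
        rw [sum_neg_distrib, sum_comm, neg_eq_zero]
        exact sum_eq_zero fun x _ => by rw [← mul_sum]; exact hdiv_mul i x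

theorem gridInner_sub_eq_mul_of_step {τ : ℝ} (hτ : τ ≠ 0) {v F : Pt → Fin 3 → ℝ}
    (hu : ∀ x ∉ Ω \ bdry Ω, u x = 0)
    (hstep : ∀ x ∈ Ω \ bdry Ω, ∀ i, (u x i - v x i) / τ = F x i) :
    gridInner Ω u u - gridInner Ω u v = τ * gridInner Ω u F := by
  simp only [gridInner, ← sum_sub_distrib, mul_sum]
  refine sum_congr rfl fun x _ => sum_congr rfl fun i _ => ?_
  by_cases hx : x ∈ Ω \ bdry Ω
  · rw [← hstep x hx i]
    field_simp
  · simp [hu x hx]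

end GridInner

theorem le_inv_mul_of_mul_sq_le_mul {n a d : ℝ} (hd : 0 < d) (hn : 0 ≤ n) (ha : 0 ≤ a)
    (h : d * n ^ 2 ≤ n * a) : n ≤ d⁻¹ * a := by
  rw [le_inv_mul_iff₀ hd]
  rcases hn.eq_or_lt with rfl | hn
  · simpa using ha
  · exact le_of_mul_le_mul_left (by linarith) hn

theorem implicit_step_damped_estimate_general (h τ : ℝ) (hτ : 0 < τ)
    (Ω : Finset Pt) (A : ℝ)
    -- discrete Poincaré type inequality I with constant A
    (hPoin : ∀ φ : Pt → ℝ, (∀ x ∉ Ω, φ x = 0) → (∀ x ∈ bdry Ω, φ x = 0) →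
      ∀ i : Fin 3, ∑ x ∈ Ω, (φ x) ^ 2 ≤ A ^ 2 * ∑ x ∈ Ω, (Dp h i φ x) ^ 2)
    (un f ut : Pt → Fin 3 → ℝ)
    (hdiv : ∀ x ∈ Ω \ bdry Ω, divc h un x = 0)
    (hut0 : ∀ x ∉ Ω, ut x = 0) (hutb : ∀ x ∈ bdry Ω, ut x = 0)
    (heq : ∀ x ∈ Ω \ bdry Ω, ∀ i : Fin 3,
      (ut x i - un x i) / τ =
        -(1 / 2) * (∑ j, (un (x - ee j) j * Dc h j (fun y => ut y i) (x - ee j)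
            + un (x + ee j) j * Dc h j (fun y => ut y i) (x + ee j)))
        + (∑ j, D2 h j (fun y => ut y i) x) + f x i) :
    dnorm h Ω ut ≤ (1 + 3 * (A⁻¹) ^ 2 * τ)⁻¹ * (dnorm h Ω un + τ * dnorm h Ω f) := by
  have hut : ∀ x ∉ Ω \ bdry Ω, ut x = 0 := fun x hx => by
    by_cases hxΩ : x ∈ Ω
    · exact hutb x (by simpa [hxΩ] using hx)
    · exact hut0 x hxΩ
  have henergy := gridInner_sub_eq_mul_of_step (F := advection h un ut + laplacian h ut + f)
    hτ.ne' hut heq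
  rw [gridInner_add_right, gridInner_add_right, gridInner_advection_eq_zero hdiv hut,
    zero_add] at henergy
  have hlap := gridInner_laplacian_le hPoin hut
  have hcs_un := gridInner_le_sqrt_mul_sqrt (Ω := Ω) ut un
  have hcs_f := gridInner_le_sqrt_mul_sqrt (Ω := Ω) ut f
  have hbound : √(gridInner Ω ut ut) ≤ (1 + 3 * (A⁻¹) ^ 2 * τ)⁻¹ *
      (√(gridInner Ω un un) + τ * √(gridInner Ω f f)) := by
    refine le_inv_mul_of_mul_sq_le_mul (by positivity) (Real.sqrt_nonneg _) (by positivity) ?_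
    rw [Real.sq_sqrt (gridInner_self_nonneg ut)]
    linarith [mul_le_mul_of_nonneg_left hlap hτ.le, mul_le_mul_of_nonneg_left hcs_f hτ.le]
  simp only [dnorm_eq_sqrt_gridInner_mul]
  calc _ ≤ (1 + 3 * (A⁻¹) ^ 2 * τ)⁻¹ * (√(gridInner Ω un un) + τ * √(gridInner Ω f f))
        * √(h ^ 3) := mul_le_mul_of_nonneg_right hbound (Real.sqrt_nonneg _)
    _ = _ := by ring

/-- Damped energy estimate (proof of Theorem 2.11): with the discrete Poincaré
constant `A`, the implicit step solution satisfies
`‖ũⁿ⁺¹‖ ≤ (1 + 3A⁻²τ)⁻¹ (‖uⁿ‖ + τ‖fⁿ‖)`. -/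
theorem implicit_step_damped_estimate (h τ : ℝ) (hh : 0 < h) (hτ : 0 < τ)
    (Ω : Finset Pt) (A : ℝ) (hA : 0 < A)
    -- discrete Poincaré type inequality I with constant A
    (hPoin : ∀ φ : Pt → ℝ, (∀ x ∉ Ω, φ x = 0) → (∀ x ∈ bdry Ω, φ x = 0) →
      ∀ i : Fin 3, ∑ x ∈ Ω, (φ x) ^ 2 ≤ A ^ 2 * ∑ x ∈ Ω, (Dp h i φ x) ^ 2)
    (un f ut : Pt → Fin 3 → ℝ)
    (hun0 : ∀ x ∉ Ω, un x = 0)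
    (hdiv : ∀ x ∈ Ω \ bdry Ω, divc h un x = 0)
    (hunb : ∀ x ∈ bdry Ω, un x = 0)
    (hut0 : ∀ x ∉ Ω, ut x = 0) (hutb : ∀ x ∈ bdry Ω, ut x = 0)
    (heq : ∀ x ∈ Ω \ bdry Ω, ∀ i : Fin 3,
      (ut x i - un x i) / τ =
        -(1 / 2) * (∑ j, (un (x - ee j) j * Dc h j (fun y => ut y i) (x - ee j)
            + un (x + ee j) j * Dc h j (fun y => ut y i) (x + ee j)))
        + (∑ j, D2 h j (fun y => ut y i) x) + f x i) :
    dnorm h Ω ut ≤ (1 + 3 * (A⁻¹) ^ 2 * τ)⁻¹ * (dnorm h Ω un + τ * dnorm h Ω f) :=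
  implicit_step_damped_estimate_general h τ hτ Ω A hPoin un f ut hdiv hut0 hutb heq
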